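/- Let (V, w, T, P) be a one-template parametric graph such that the graph on V with edge set {pairs of positive weight} is connected and the subgraph induced by T is connected. Suppose there exists a minimum (global) cut of the P-fold instantiation G_P in which all boundary vertices of T lie on the same side. Then there exists a minimum cut S of G_P such that either (a) all copies of all vertices of T lie on the same side of S as all boundary vertices of T, or (b) one side of S is contained in T × {i} for a single index i ∈ Fin P. -/
import Mathlib


open Finset

/-- Vertex set of the `P`-fold instantiation of a one-template parametric graph. -/
abbrev Inst (V : Type) [Fintype V] [DecidableEq V] (T : Finset V) (P : ℕ) : Type :=
  {x : V // x ∉ T} ⊕ ({x : V // x ∈ T} × Fin P)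

/-- Weight function `w_P` of the `P`-fold instantiation `G_P`. -/
noncomputable def instWeight {V : Type} [Fintype V] [DecidableEq V]
    (w : V → V → ℝ) (T : Finset V) (P : ℕ) :
    Inst V T P → Inst V T P → ℝ
  | Sum.inl x, Sum.inl y => w x.1 y.1
  | Sum.inl x, Sum.inr (v, _) => w x.1 v.1
  | Sum.inr (u, _), Sum.inl y => w u.1 y.1
  | Sum.inr (u, i), Sum.inr (v, j) => if i = j then w u.1 v.1 else 0

/-- Value of the cut `(S, Sᶜ)`. -/
noncomputable def cutValue {W : Type} [Fintype W] [DecidableEq W]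
    (c : W → W → ℝ) (S : Finset W) : ℝ :=
  ∑ a ∈ S, ∑ b ∈ Sᶜ, c a b

/-- `S` is a minimum (global) cut of the weighted graph with weight function `c`. -/
def IsMinCut {W : Type} [Fintype W] [DecidableEq W] (c : W → W → ℝ) (S : Finset W) : Prop :=
  S ≠ ∅ ∧ S ≠ Finset.univ ∧
    ∀ S' : Finset W, S' ≠ ∅ → S' ≠ Finset.univ → cutValue c S ≤ cutValue c S'

/-- `x` is a boundary vertex of the template `T`: it lies outside `T` and has an edge
(positive weight) to some template vertex. -/
def Boundary {V : Type} (w : V → V → ℝ) (T : Finset V) (x : V) : Prop :=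
  x ∉ T ∧ ∃ v ∈ T, 0 < w x v

section Aux
variable {V : Type} [Fintype V] [DecidableEq V] {w : V → V → ℝ} {T : Finset V} {P : ℕ}

lemma instWeight_symm (hsymm : ∀ u v, w u v = w v u) (a b : Inst V T P) :
    instWeight w T P a b = instWeight w T P b a := by
  rcases a with x | ⟨u, i⟩ <;> rcases b with y | ⟨v, j⟩
  · simp [instWeight, hsymm x.1]
  · simp [instWeight, hsymm x.1]
  · simp [instWeight, hsymm u.1]
  · rcases eq_or_ne i j with h | h
    · simp [instWeight, h, hsymm u.1]
    · simp [instWeight, h, h.symm]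

lemma instWeight_nonneg (hnonneg : ∀ u v, 0 ≤ w u v) (a b : Inst V T P) :
    0 ≤ instWeight w T P a b := by
  rcases a with x | ⟨u, i⟩ <;> rcases b with y | ⟨v, j⟩ <;> simp [instWeight, hnonneg]
  split <;> simp [hnonneg]

lemma cutValue_compl {W : Type} [Fintype W] [DecidableEq W] {c : W → W → ℝ}
    (hc : ∀ a b, c a b = c b a) (S : Finset W) : cutValue c Sᶜ = cutValue c S := by
  unfold cutValue
  rw [compl_compl, Finset.sum_comm]
  exact Finset.sum_congr rfl fun a _ => Finset.sum_congr rfl fun b _ => hc b a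

lemma isMinCut_compl {W : Type} [Fintype W] [DecidableEq W] {c : W → W → ℝ}
    (hc : ∀ a b, c a b = c b a) {S : Finset W} (h : IsMinCut c S) : IsMinCut c Sᶜ := by
  obtain ⟨h1, h2, h3⟩ := h
  refine ⟨?_, ?_, fun S' hS'1 hS'2 => ?_⟩
  · simpa [Finset.compl_eq_empty_iff] using h2
  · simpa [Finset.compl_eq_univ_iff] using h1
  · rw [cutValue_compl hc]; exact h3 S' hS'1 hS'2

end Aux
set_option maxHeartbeats 1000000 in
lemma key {V : Type} [Fintype V] [DecidableEq V] {w : V → V → ℝ} {T : Finset V} {P : ℕ}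
    (hsymm : ∀ u v, w u v = w v u) (hnonneg : ∀ u v, 0 ≤ w u v)
    (C : Finset (Inst V T P)) (hmin : IsMinCut (instWeight w T P) C)
    (hbd : ∀ x : {x : V // x ∉ T}, Boundary w T x.1 → Sum.inl x ∈ C) :
    ∃ S : Finset (Inst V T P), IsMinCut (instWeight w T P) S ∧
      (((∀ x : {x : V // x ∉ T}, Boundary w T x.1 → Sum.inl x ∈ S) ∧
          (∀ (v : {x : V // x ∈ T}) (i : Fin P), Sum.inr (v, i) ∈ S)) ∨
        ((∀ x : {x : V // x ∉ T}, Boundary w T x.1 → Sum.inl x ∉ S) ∧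
          (∀ (v : {x : V // x ∈ T}) (i : Fin P), Sum.inr (v, i) ∉ S)) ∨
        (∃ i : Fin P,
          (∀ a ∈ S, ∃ v : {x : V // x ∈ T}, a = Sum.inr (v, i)) ∨
          (∀ a : Inst V T P, a ∉ S → ∃ v : {x : V // x ∈ T}, a = Sum.inr (v, i)))) := by
  set c := instWeight w T P with hc
  obtain ⟨hC1, hC2, hC3⟩ := hmin
  have hzero : ∀ (x : {x : V // x ∉ T}) (u : {x : V // x ∈ T}) (i : Fin P),
      Sum.inl x ∉ C → c (Sum.inr (u, i)) (Sum.inl x) = 0 := by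
    intro x u i hx
    have hb : ¬ Boundary w T x.1 := fun hB => hx (hbd x hB)
    have hlt : ¬ 0 < w x.1 u.1 := fun h => hb ⟨x.2, u.1, u.2, h⟩
    have h0 : w x.1 u.1 = 0 := le_antisymm (not_lt.1 hlt) (hnonneg _ _)
    rw [hc]
    simp only [instWeight, hsymm u.1 x.1, h0]
  set D : Finset (Inst V T P) := C ∪ Finset.univ.filter (fun a => a.isRight) with hD
  by_cases hDu : D = Finset.univ
  · -- Cᶜ consists only of template copies
    have hright : ∀ a : Inst V T P, a ∉ C → a.isRight := by
      intro a ha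
      have h : a ∈ D := hDu ▸ Finset.mem_univ a
      rcases Finset.mem_union.1 h with h | h
      · exact absurd h ha
      · exact (Finset.mem_filter.1 h).2
    have hCc : Cᶜ.Nonempty := Finset.nonempty_iff_ne_empty.2
      (by simpa [Finset.compl_eq_empty_iff] using hC2)
    obtain ⟨b₀, hb₀⟩ := hCc
    have hb₀C : b₀ ∉ C := Finset.mem_compl.1 hb₀
    obtain ⟨⟨v₀, i₀⟩, rfl⟩ : ∃ p, b₀ = Sum.inr p := by
      rcases b₀ with x | p
      · simpa using hright _ hb₀C
      · exact ⟨p, rfl⟩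
    set A : Finset (Inst V T P) :=
      Cᶜ.filter (fun a => ∃ v : {x : V // x ∈ T}, a = Sum.inr (v, i₀)) with hA
    have hAsub : A ⊆ Cᶜ := Finset.filter_subset _ _
    have hb₀A : Sum.inr (v₀, i₀) ∈ A := Finset.mem_filter.2 ⟨hb₀, ⟨v₀, rfl⟩⟩
    have hAne : A ≠ ∅ := Finset.ne_empty_of_mem hb₀A
    have hAnu : A ≠ Finset.univ := by
      intro h
      obtain ⟨a, ha⟩ := Finset.nonempty_iff_ne_empty.2 hC1
      exact Finset.mem_compl.1 (hAsub (h ▸ Finset.mem_univ a)) ha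
    have hval : cutValue c A ≤ cutValue c C := by
      have step1 : cutValue c A = ∑ a ∈ A, ∑ b ∈ C, c a b := by
        unfold cutValue
        refine Finset.sum_congr rfl fun a ha => ?_
        obtain ⟨haC, v, rfl⟩ := Finset.mem_filter.1 ha
        refine (Finset.sum_subset ?_ ?_).symm
        · intro b hb
          exact Finset.mem_compl.2 fun hbA => Finset.mem_compl.1 (hAsub hbA) hb
        · intro b hbA hbC
          have hbCc : b ∈ Cᶜ := Finset.mem_compl.2 hbC
          obtain ⟨⟨u, j⟩, rfl⟩ : ∃ p, b = Sum.inr p := by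
            rcases b with x | p
            · simpa using hright _ hbC
            · exact ⟨p, rfl⟩
          have hji : j ≠ i₀ := by
            intro h
            subst h
            exact (Finset.mem_compl.1 hbA) (Finset.mem_filter.2 ⟨hbCc, ⟨u, rfl⟩⟩)
          rw [hc]
          simp only [instWeight, if_neg (fun h : i₀ = j => hji h.symm)]
      calc cutValue c A = ∑ a ∈ A, ∑ b ∈ C, c a b := step1
        _ ≤ ∑ a ∈ Cᶜ, ∑ b ∈ C, c a b :=
            Finset.sum_le_sum_of_subset_of_nonneg hAsub (fun a _ _ =>
              Finset.sum_nonneg fun b _ => instWeight_nonneg hnonneg a b)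
        _ = cutValue c Cᶜ := by unfold cutValue; rw [compl_compl]
        _ = cutValue c C := cutValue_compl (instWeight_symm hsymm) _
    refine ⟨A, ⟨hAne, hAnu, fun S' h1 h2 => le_trans hval (hC3 S' h1 h2)⟩,
      Or.inr (Or.inr ⟨i₀, Or.inl fun a ha => (Finset.mem_filter.1 ha).2⟩)⟩
  · have hCD : C ⊆ D := Finset.subset_union_left
    have hDne : D ≠ ∅ := fun h => hC1 (Finset.subset_empty.1 (h ▸ hCD))
    have hval : cutValue c D ≤ cutValue c C := by
      have step1 : cutValue c D = ∑ a ∈ C, ∑ b ∈ Dᶜ, c a b := by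
        unfold cutValue
        refine (Finset.sum_subset hCD ?_).symm
        intro a haD haC
        have hr : a.isRight := by
          rcases Finset.mem_union.1 haD with h | h
          · exact absurd h haC
          · exact (Finset.mem_filter.1 h).2
        obtain ⟨⟨u, i⟩, rfl⟩ : ∃ p, a = Sum.inr p := by
          rcases a with x | p
          · simpa using hr
          · exact ⟨p, rfl⟩
        refine Finset.sum_eq_zero fun b hb => ?_
        have hbD : b ∉ D := Finset.mem_compl.1 hb
        have hbC : b ∉ C := fun h => hbD (hCD h)
        obtain ⟨x, rfl⟩ : ∃ x, b = Sum.inl x := by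
          rcases b with x | p
          · exact ⟨x, rfl⟩
          · exact absurd (by simp [hD] : Sum.inr p ∈ D) hbD
        exact hzero x u i hbC
      rw [step1]
      unfold cutValue
      refine Finset.sum_le_sum fun a _ => ?_
      exact Finset.sum_le_sum_of_subset_of_nonneg (Finset.compl_subset_compl.2 hCD)
        (fun b _ _ => instWeight_nonneg hnonneg a b)
    refine ⟨D, ⟨hDne, hDu, fun S' h1 h2 => le_trans hval (hC3 S' h1 h2)⟩,
      Or.inl ⟨fun x hx => hCD (hbd x hx),
        fun v i => by simp [hD]⟩⟩

/-- if the template graph is connected, the subgraph induced by `T` is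
connected, and some minimum cut of `G_P` has all boundary vertices of `T` on one side,
then there is a minimum cut `S` of `G_P` such that either (a) all copies of all template
vertices are on the same side as all boundary vertices, or (b) one side of `S` is
contained in a single instance `T × {i}` of the template. -/
theorem minCut_no_template_cross_structure
    {V : Type} [Fintype V] [DecidableEq V] (w : V → V → ℝ)
    (T : Finset V) (P : ℕ) (hT : T.Nonempty) (hP : 1 ≤ P)
    (hsymm : ∀ u v, w u v = w v u) (hnonneg : ∀ u v, 0 ≤ w u v)
    (hdiag : ∀ v, w v v = 0)
    (hconn : (SimpleGraph.fromRel fun u v => 0 < w u v).Connected)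
    (hconnT : ((SimpleGraph.fromRel fun u v => 0 < w u v).induce (↑T : Set V)).Connected)
    (hexists : ∃ C : Finset (Inst V T P), IsMinCut (instWeight w T P) C ∧
      ((∀ x : {x : V // x ∉ T}, Boundary w T x.1 → Sum.inl x ∈ C) ∨
       (∀ x : {x : V // x ∉ T}, Boundary w T x.1 → Sum.inl x ∉ C))) :
    ∃ S : Finset (Inst V T P), IsMinCut (instWeight w T P) S ∧
      ( -- (a) all copies of all template vertices on the same side as all boundary vertices
        ((∀ x : {x : V // x ∉ T}, Boundary w T x.1 → Sum.inl x ∈ S) ∧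
          (∀ (v : {x : V // x ∈ T}) (i : Fin P), Sum.inr (v, i) ∈ S)) ∨
        ((∀ x : {x : V // x ∉ T}, Boundary w T x.1 → Sum.inl x ∉ S) ∧
          (∀ (v : {x : V // x ∈ T}) (i : Fin P), Sum.inr (v, i) ∉ S)) ∨
        -- (b) one side of the cut is contained in a single instance `T × {i}`
        (∃ i : Fin P,
          (∀ a ∈ S, ∃ v : {x : V // x ∈ T}, a = Sum.inr (v, i)) ∨
          (∀ a : Inst V T P, a ∉ S → ∃ v : {x : V // x ∈ T}, a = Sum.inr (v, i)))) := by
  obtain ⟨C, hmin, hside⟩ := hexists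
  rcases hside with h | h
  · exact key hsymm hnonneg C hmin h
  · exact key hsymm hnonneg Cᶜ (isMinCut_compl (instWeight_symm hsymm) hmin)
      (fun x hx => Finset.mem_compl.2 (h x hx))
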